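/- arXiv:2410.14081 — 2 statements merged into one kernel-verified Lean document; each statement's English description precedes it below -/
import Mathlib

section
/- Let S be a finite state space and A a finite action space, γ ∈ (0,1). Define the inverse Bellman operator T^π mapping Q : S×A → ℝ to (T^π Q)(s,a) = Q(s,a) − γ·Σ_{s'} P(s'|s,a)·V^π_Q(s'), where V^π_Q(s) = Σ_a π(a|s)·(Q(s,a) − log π(a|s)). Then T^π is a bijection from ℝ^{S×A} to ℝ^{S×A}. -/
/-- The inverse soft Bellman operator is a bijection on ℝ^{S×A}. -/
theorem stmt_2 {S A : Type*} [Fintype S] [Fintype A] (γ : ℝ) (hγ : γ ∈ Set.Ioo (0:ℝ) 1)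
    (P : S → A → S → ℝ) (hP0 : ∀ s a s', 0 ≤ P s a s') (hP1 : ∀ s a, ∑ s', P s a s' = 1)
    (π : S → A → ℝ) (hπ0 : ∀ s a, 0 < π s a) (hπ1 : ∀ s, ∑ a, π s a = 1) :
    Function.Bijective (fun (Q : S × A → ℝ) (sa : S × A) =>
      Q sa - γ * ∑ s', P sa.1 sa.2 s' *
        ∑ a', π s' a' * (Q (s', a') - Real.log (π s' a'))) := by
  classical
  set L : (S × A → ℝ) →ₗ[ℝ] (S × A → ℝ) :=
    { toFun := fun Q sa => Q sa - γ * ∑ s', P sa.1 sa.2 s' * ∑ a', π s' a' * Q (s', a')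
      map_add' := by
        intro x y
        funext sa
        simp only [Pi.add_apply]
        rw [show (∑ s', P sa.1 sa.2 s' * ∑ a', π s' a' * (x (s', a') + y (s', a')))
          = (∑ s', P sa.1 sa.2 s' * ∑ a', π s' a' * x (s', a'))
            + (∑ s', P sa.1 sa.2 s' * ∑ a', π s' a' * y (s', a')) by
          rw [← Finset.sum_add_distrib]
          refine Finset.sum_congr rfl fun s' _ => ?_
          rw [← mul_add, ← Finset.sum_add_distrib]
          congr 1
          refine Finset.sum_congr rfl fun a' _ => ?_
          ring]
        ring
      map_smul' := by
        intro c x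
        funext sa
        simp only [Pi.smul_apply, smul_eq_mul, RingHom.id_apply]
        rw [show (∑ s', P sa.1 sa.2 s' * ∑ a', π s' a' * (c * x (s', a')))
          = c * (∑ s', P sa.1 sa.2 s' * ∑ a', π s' a' * x (s', a')) by
          rw [Finset.mul_sum]
          refine Finset.sum_congr rfl fun s' _ => ?_
          rw [show (∑ a', π s' a' * (c * x (s', a')))
            = c * ∑ a', π s' a' * x (s', a') by
            rw [Finset.mul_sum]
            exact Finset.sum_congr rfl fun a' _ => by ring]
          ring]
        ring }
  have hinj : Function.Injective L := by
    rw [← LinearMap.ker_eq_bot, LinearMap.ker_eq_bot']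
    intro Q hQ
    by_contra hne
    have hne' : ∃ sa, Q sa ≠ 0 := by
      by_contra h; push_neg at h; exact hne (funext h)
    obtain ⟨sa₁, hsa₁⟩ := hne'
    obtain ⟨sa₀, -, hmax⟩ := Finset.exists_max_image Finset.univ (fun sa => |Q sa|)
      ⟨sa₁, Finset.mem_univ _⟩
    have hmax' : ∀ sa : S × A, |Q sa| ≤ |Q sa₀| := fun sa => hmax sa (Finset.mem_univ _)
    have hpos : 0 < |Q sa₀| := lt_of_lt_of_le (abs_pos.mpr hsa₁) (hmax' sa₁)
    have hQ0 : Q sa₀ = γ * ∑ s', P sa₀.1 sa₀.2 s' * ∑ a', π s' a' * Q (s', a') := by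
      have := congrFun hQ sa₀
      simp only [L, LinearMap.coe_mk, AddHom.coe_mk, Pi.zero_apply] at this
      linarith
    have hinner : ∀ s' : S, |∑ a', π s' a' * Q (s', a')| ≤ |Q sa₀| := by
      intro s'
      calc |∑ a', π s' a' * Q (s', a')| ≤ ∑ a', |π s' a' * Q (s', a')| :=
            Finset.abs_sum_le_sum_abs _ _
        _ = ∑ a', π s' a' * |Q (s', a')| := by
            refine Finset.sum_congr rfl fun a' _ => ?_
            rw [abs_mul, abs_of_pos (hπ0 s' a')]
        _ ≤ ∑ a', π s' a' * |Q sa₀| := by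
            refine Finset.sum_le_sum fun a' _ => ?_
            exact mul_le_mul_of_nonneg_left (hmax' (s', a')) (hπ0 s' a').le
        _ = |Q sa₀| := by rw [← Finset.sum_mul, hπ1 s', one_mul]
    have houter : |∑ s', P sa₀.1 sa₀.2 s' * ∑ a', π s' a' * Q (s', a')| ≤ |Q sa₀| := by
      calc |∑ s', P sa₀.1 sa₀.2 s' * ∑ a', π s' a' * Q (s', a')|
          ≤ ∑ s', |P sa₀.1 sa₀.2 s' * ∑ a', π s' a' * Q (s', a')| :=
            Finset.abs_sum_le_sum_abs _ _
        _ = ∑ s', P sa₀.1 sa₀.2 s' * |∑ a', π s' a' * Q (s', a')| := by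
            refine Finset.sum_congr rfl fun s' _ => ?_
            rw [abs_mul, abs_of_nonneg (hP0 _ _ s')]
        _ ≤ ∑ s', P sa₀.1 sa₀.2 s' * |Q sa₀| := by
            refine Finset.sum_le_sum fun s' _ => ?_
            exact mul_le_mul_of_nonneg_left (hinner s') (hP0 _ _ s')
        _ = |Q sa₀| := by rw [← Finset.sum_mul, hP1, one_mul]
    have : |Q sa₀| ≤ γ * |Q sa₀| := by
      calc |Q sa₀| = γ * |∑ s', P sa₀.1 sa₀.2 s' * ∑ a', π s' a' * Q (s', a')| := by
            rw [hQ0, abs_mul, abs_of_pos hγ.1]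
        _ ≤ γ * |Q sa₀| := mul_le_mul_of_nonneg_left houter hγ.1.le
    nlinarith [hγ.2]
  have hbij : Function.Bijective L :=
    ⟨hinj, LinearMap.injective_iff_surjective.mp hinj⟩
  set d : S × A → ℝ :=
    fun sa => γ * ∑ s', P sa.1 sa.2 s' * ∑ a', π s' a' * Real.log (π s' a') with hd
  have hdecomp : (fun (Q : S × A → ℝ) (sa : S × A) =>
      Q sa - γ * ∑ s', P sa.1 sa.2 s' *
        ∑ a', π s' a' * (Q (s', a') - Real.log (π s' a'))) = fun Q => L Q + d := by
    funext Q sa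
    simp only [L, d, LinearMap.coe_mk, AddHom.coe_mk, Pi.add_apply]
    rw [show (∑ s', P sa.1 sa.2 s' * ∑ a', π s' a' * (Q (s', a') - Real.log (π s' a')))
      = (∑ s', P sa.1 sa.2 s' * ∑ a', π s' a' * Q (s', a'))
        - (∑ s', P sa.1 sa.2 s' * ∑ a', π s' a' * Real.log (π s' a')) by
      rw [← Finset.sum_sub_distrib]
      refine Finset.sum_congr rfl fun s' _ => ?_
      rw [← mul_sub, ← Finset.sum_sub_distrib]
      congr 1
      refine Finset.sum_congr rfl fun a' _ => ?_
      ring]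
    ring
  rw [hdecomp]
  exact (Equiv.addRight d).bijective.comp hbij
end

section
/- Monotonicity of the maximum-entropy policy improvement: let A be finite, Q : A → ℝ fixed, and suppose π' and π are full-support distributions on A with KL(π' ‖ softmax(Q)) < KL(π ‖ softmax(Q)). Then V^{π'} > V^{π}, where V^{π} = E_{a~π}[Q(a) − log π(a)]. -/
lemma kl_eq {A : Type*} [Fintype A] [Nonempty A] (Q : A → ℝ) (p : A → ℝ)
    (hp0 : ∀ a, 0 < p a) (hp1 : ∑ a, p a = 1) :
    ∑ a, p a * Real.log (p a / (Real.exp (Q a) / ∑ a', Real.exp (Q a')))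
      = Real.log (∑ a', Real.exp (Q a')) - ∑ a, p a * (Q a - Real.log (p a)) := by
  have hZ : (0:ℝ) < ∑ a', Real.exp (Q a') :=
    Finset.sum_pos (fun a _ => Real.exp_pos _) Finset.univ_nonempty
  have : ∀ a, p a * Real.log (p a / (Real.exp (Q a) / ∑ a', Real.exp (Q a')))
      = p a * Real.log (∑ a', Real.exp (Q a')) - p a * (Q a - Real.log (p a)) := by
    intro a
    rw [Real.log_div (hp0 a).ne' (div_pos (Real.exp_pos _) hZ).ne',
      Real.log_div (Real.exp_pos _).ne' hZ.ne', Real.log_exp]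
    ring
  rw [Finset.sum_congr rfl (fun a _ => this a), Finset.sum_sub_distrib,
    ← Finset.sum_mul, hp1, one_mul]

/-- Decreasing the KL to the softmax policy strictly increases the soft value. -/
theorem stmt_7 {A : Type*} [Fintype A] [Nonempty A] (Q : A → ℝ)
    (π π' : A → ℝ) (hπ0 : ∀ a, 0 < π a) (hπ1 : ∑ a, π a = 1)
    (hπ'0 : ∀ a, 0 < π' a) (hπ'1 : ∑ a, π' a = 1)
    (hKL : ∑ a, π' a * Real.log (π' a / (Real.exp (Q a) / ∑ a', Real.exp (Q a')))
         < ∑ a, π a * Real.log (π a / (Real.exp (Q a) / ∑ a', Real.exp (Q a')))) :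
    ∑ a, π a * (Q a - Real.log (π a)) < ∑ a, π' a * (Q a - Real.log (π' a)) := by
  rw [kl_eq Q π' hπ'0 hπ'1, kl_eq Q π hπ0 hπ1] at hKL
  linarith
end
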